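/- arXiv:math/0602005 — 3 statements merged into one kernel-verified Lean document; each statement's English description precedes it below -/
import Mathlib

section
/- Let the strongly monotone, forward complete system ẋ = f(x) on X be translation invariant along the unit vector v ∈ interior(K), with X closed and invariant under translations by v, and let ξ ∈ X be such that the solution φ_t(ξ) is bounded modulo v. Then every ω-limit point of the projected trajectory is an equilibrium of the projected system: if t_n → ∞ and π_v(φ_{t_n}(ξ)) → p, then p ∈ X ∩ v^⊥ and f(p) ∈ span{v}. -/
/-
For `v` in the interior of the pointed cone `K`, `osc w = min {μ | w ⪯ μ v} + min {μ | -w ⪯ μ v}`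
is a seminorm vanishing exactly on `ℝ v`. Strong monotonicity and translation invariance make the
flow nonexpansive for `osc`, and strictly contracting on pairs that do not differ by a multiple
of `v`. Hence `osc (φ (t + s) ξ - φ t ξ)` decreases to a limit `L` as `t → ∞`. A convergent
subsequence of the bounded projected trajectory gives a pair `(q, p)` whose oscillation is `L`
both at time `0` and at time `1`, which forces `L = 0`. So the projected trajectory shifted by `s`
also converges to `p`, i.e. `π_v (φ s p) = p` for all `s ≥ 0`, and differentiating at `s = 0`
gives `π_v (f p) = 0`. The semigroup property of `φ` used throughout comes from uniqueness of
solutions of the locally Lipschitz ODE.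
-/

open Filter Topology Set

/-- The orthogonal projection `π_v(x) = x - (vᵀx) v` onto `v^⊥`. -/
noncomputable def piProj {n : ℕ} (v x : EuclideanSpace ℝ (Fin n)) :
    EuclideanSpace ℝ (Fin n) :=
  x - (inner ℝ v x : ℝ) • v

variable {E : Type*} [NormedAddCommGroup E] [NormedSpace ℝ E]

namespace ProperCone

def ofConvex (K : Set E) (hne : K.Nonempty) (hclosed : IsClosed K) (hconv : Convex ℝ K)
    (hsmul : ∀ c : ℝ, 0 ≤ c → ∀ x ∈ K, c • x ∈ K) : ProperCone ℝ E where
  carrier := K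
  add_mem' {x y} hx hy := by
    simpa [smul_add, smul_smul] using
      hsmul 2 zero_le_two _ (hconv hx hy (by norm_num) (by norm_num) (add_halves 1))
  zero_mem' := by simpa using hsmul 0 le_rfl _ hne.some_mem
  smul_mem' c x hx := hsmul c c.2 x hx
  isClosed' := hclosed

end ProperCone

section Gauge

variable {K : ProperCone ℝ E} {v w : E} {μ ε : ℝ}

/-- The least `μ` with `w ⪯ μ v`; `oscGauge K v w` is then `max - min` of `w` in units of `v`. -/
noncomputable def upperGauge (K : ProperCone ℝ E) (v w : E) : ℝ :=
  sInf {μ : ℝ | μ • v - w ∈ K}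

noncomputable def oscGauge (K : ProperCone ℝ E) (v w : E) : ℝ :=
  upperGauge K v w + upperGauge K v (-w)

lemma oscGauge_neg (w : E) : oscGauge K v (-w) = oscGauge K v w := by
  rw [oscGauge, oscGauge, neg_neg, add_comm]

lemma nonneg_of_smul_mem (hK : ∀ x ∈ K, -x ∈ K → x = 0) (hvK : v ∈ K) (hv0 : v ≠ 0)
    {c : ℝ} (h : c • v ∈ K) : 0 ≤ c := by
  by_contra! hc
  have hneg : -v ∈ K := by
    have := K.smul_mem h (neg_nonneg.2 (inv_nonpos.2 hc.le))
    rwa [smul_smul, neg_mul, inv_mul_cancel₀ hc.ne, neg_one_smul] at this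
  exact hv0 (hK v hvK hneg)

lemma div_smul_sub_mem (hε : 0 < ε) (hball : Metric.closedBall v ε ⊆ K) (w : E) :
    (‖w‖ / ε) • v - w ∈ K := by
  rcases eq_or_ne w 0 with rfl | hw
  · simp
  have hμ : 0 < ‖w‖ / ε := by positivity
  have hmem : v - (‖w‖ / ε)⁻¹ • w ∈ K := hball <| by
    rw [Metric.mem_closedBall, dist_eq_norm, sub_sub_cancel_left, norm_neg, norm_smul,
      Real.norm_of_nonneg (inv_nonneg.2 hμ.le), inv_div, div_mul_cancel₀ _ (norm_ne_zero_iff.2 hw)]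
  have := K.smul_mem hmem hμ.le
  rwa [smul_sub, smul_smul, mul_inv_cancel₀ hμ.ne', one_smul] at this

lemma neg_div_le_of_smul_sub_mem (hK : ∀ x ∈ K, -x ∈ K → x = 0) (hv0 : v ≠ 0) (hε : 0 < ε)
    (hball : Metric.closedBall v ε ⊆ K) (h : μ • v - w ∈ K) : -(‖w‖ / ε) ≤ μ := by
  have hsum := K.add_mem h (div_smul_sub_mem hε hball (-w))
  rw [norm_neg, show μ • v - w + ((‖w‖ / ε) • v - -w) = (μ + ‖w‖ / ε) • v by module] at hsum
  linarith [nonneg_of_smul_mem hK (hball (Metric.mem_closedBall_self hε.le)) hv0 hsum]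

variable (hK : ∀ x ∈ K, -x ∈ K → x = 0) (hv : v ∈ interior (K : Set E)) (hv0 : v ≠ 0)
include hK hv hv0

lemma bddBelow_setOf_smul_sub_mem (w : E) : BddBelow {μ : ℝ | μ • v - w ∈ K} := by
  obtain ⟨ε, hε, hball⟩ := Metric.nhds_basis_closedBall.mem_iff.1 (mem_interior_iff_mem_nhds.1 hv)
  exact ⟨_, fun μ hμ => neg_div_le_of_smul_sub_mem hK hv0 hε hball hμ⟩

lemma upperGauge_smul_sub_mem (w : E) : upperGauge K v w • v - w ∈ K := by
  obtain ⟨ε, hε, hball⟩ := Metric.nhds_basis_closedBall.mem_iff.1 (mem_interior_iff_mem_nhds.1 hv)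
  exact (K.isClosed.preimage (f := fun μ : ℝ => μ • v - w) (by fun_prop)).csInf_mem
    ⟨_, div_smul_sub_mem hε hball w⟩
    (bddBelow_setOf_smul_sub_mem hK hv hv0 w)

lemma upperGauge_le_iff : upperGauge K v w ≤ μ ↔ μ • v - w ∈ K := by
  refine ⟨fun h => ?_, fun h => csInf_le (bddBelow_setOf_smul_sub_mem hK hv hv0 w) h⟩
  have := K.add_mem (K.smul_mem (interior_subset hv) (sub_nonneg.2 h))
    (upperGauge_smul_sub_mem hK hv hv0 w)
  rwa [← add_sub_assoc, ← add_smul, sub_add_cancel] at this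

lemma upperGauge_lt_of_mem_interior (h : μ • v - w ∈ interior (K : Set E)) :
    upperGauge K v w < μ := by
  obtain ⟨b, hbμ, hb⟩ := Filter.Eventually.exists_lt
    ((isOpen_interior.preimage (by fun_prop : Continuous fun b : ℝ => b • v - w)).mem_nhds h)
  exact ((upperGauge_le_iff hK hv hv0).2 (interior_subset hb)).trans_lt hbμ

lemma upperGauge_add_le (w₁ w₂ : E) :
    upperGauge K v (w₁ + w₂) ≤ upperGauge K v w₁ + upperGauge K v w₂ := by
  rw [upperGauge_le_iff hK hv hv0, add_smul, add_sub_add_comm]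
  exact K.add_mem (upperGauge_smul_sub_mem hK hv hv0 w₁) (upperGauge_smul_sub_mem hK hv hv0 w₂)

lemma upperGauge_add_smul (w : E) (c : ℝ) :
    upperGauge K v (w + c • v) = upperGauge K v w + c :=
  eq_of_forall_ge_iff fun μ => by
    rw [upperGauge_le_iff hK hv hv0, ← le_sub_iff_add_le, upperGauge_le_iff hK hv hv0,
      show μ • v - (w + c • v) = (μ - c) • v - w by module]

lemma upperGauge_smul {a : ℝ} (ha : 0 < a) (w : E) :
    upperGauge K v (a • w) = a * upperGauge K v w :=
  eq_of_forall_ge_iff fun μ => by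
    rw [upperGauge_le_iff hK hv hv0, ← le_div_iff₀' ha, upperGauge_le_iff hK hv hv0,
      show μ • v - a • w = a • ((μ / a) • v - w) by
        rw [smul_sub, smul_smul, mul_div_cancel₀ _ ha.ne']]
    exact K.toPointedCone.smul_mem_iff ha

lemma oscGauge_nonneg (w : E) : 0 ≤ oscGauge K v w := by
  refine nonneg_of_smul_mem hK (interior_subset hv) hv0 ?_
  have := K.add_mem (upperGauge_smul_sub_mem hK hv hv0 w) (upperGauge_smul_sub_mem hK hv hv0 (-w))
  rwa [sub_neg_eq_add, sub_add_add_cancel, ← add_smul] at this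

lemma oscGauge_add_le (w₁ w₂ : E) :
    oscGauge K v (w₁ + w₂) ≤ oscGauge K v w₁ + oscGauge K v w₂ := by
  have h₁ := upperGauge_add_le hK hv hv0 w₁ w₂
  have h₂ := upperGauge_add_le hK hv hv0 (-w₁) (-w₂)
  rw [← neg_add] at h₂
  rw [oscGauge, oscGauge, oscGauge]
  linarith

lemma oscGauge_add_smul (w : E) (c : ℝ) : oscGauge K v (w + c • v) = oscGauge K v w := by
  rw [oscGauge, oscGauge, neg_add, ← neg_smul, upperGauge_add_smul hK hv hv0,
    upperGauge_add_smul hK hv hv0]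
  ring

lemma oscGauge_smul {a : ℝ} (ha : 0 < a) (w : E) :
    oscGauge K v (a • w) = a * oscGauge K v w := by
  rw [oscGauge, oscGauge, ← smul_neg, upperGauge_smul hK hv hv0 ha,
    upperGauge_smul hK hv hv0 ha, mul_add]

lemma oscGauge_smul_self (c : ℝ) : oscGauge K v (c • v) = 0 := by
  have h0 : upperGauge K v 0 ≤ 0 := (upperGauge_le_iff hK hv hv0).2 (by simp)
  have := oscGauge_nonneg hK hv hv0 0
  rw [← zero_add (c • v), oscGauge_add_smul hK hv hv0]
  rw [oscGauge, neg_zero] at this ⊢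
  linarith

lemma oscGauge_le (hε : 0 < ε) (hball : Metric.closedBall v ε ⊆ K) (w : E) :
    oscGauge K v w ≤ 2 / ε * ‖w‖ := by
  have h₁ := (upperGauge_le_iff hK hv hv0).2 (div_smul_sub_mem hε hball w)
  have h₂ := (upperGauge_le_iff hK hv hv0).2 (div_smul_sub_mem hε hball (-w))
  rw [norm_neg] at h₂
  rw [oscGauge]
  linarith [show ‖w‖ / ε + ‖w‖ / ε = 2 / ε * ‖w‖ by ring]

lemma continuous_oscGauge : Continuous (oscGauge K v) := by
  obtain ⟨ε, hε, hball⟩ := Metric.nhds_basis_closedBall.mem_iff.1 (mem_interior_iff_mem_nhds.1 hv)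
  refine (LipschitzWith.of_le_add_mul' (2 / ε) fun x y => ?_).continuous
  have := oscGauge_add_le hK hv hv0 y (x - y)
  rw [add_sub_cancel] at this
  rw [dist_eq_norm]
  linarith [oscGauge_le hK hv hv0 hε hball (x - y)]

lemma eq_smul_of_oscGauge_eq_zero (h : oscGauge K v w = 0) : w = upperGauge K v w • v := by
  have h₁ := upperGauge_smul_sub_mem hK hv hv0 w
  have h₂ := upperGauge_smul_sub_mem hK hv hv0 (-w)
  rw [show upperGauge K v (-w) = -upperGauge K v w by rw [oscGauge] at h; linarith,
    neg_smul, sub_neg_eq_add, neg_add_eq_sub, ← neg_sub] at h₂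
  exact (sub_eq_zero.1 (hK _ h₁ h₂)).symm

end Gauge

lemma exists_pos_mul_norm_le_of_continuous [FiniteDimensional ℝ E] {g : E → ℝ} (hg : Continuous g)
    (hsmul : ∀ a : ℝ, 0 < a → ∀ w, g (a • w) = a * g w) (S : Submodule ℝ E)
    (hpos : ∀ w ∈ S, w ≠ 0 → 0 < g w) : ∃ c > 0, ∀ w ∈ S, c * ‖w‖ ≤ g w := by
  have hT : IsCompact ((S : Set E) ∩ Metric.sphere 0 1) :=
    (isCompact_sphere 0 1).inter_left S.closed_of_finiteDimensional
  obtain ⟨c, hc, hcg⟩ := hT.exists_forall_le' hg.continuousOn fun w hw =>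
    hpos w hw.1 (by rintro rfl; simp at hw)
  refine ⟨c, hc, fun w hw => ?_⟩
  rcases eq_or_ne w 0 with rfl | hw0
  · have h0 := hsmul 2 two_pos 0
    rw [smul_zero] at h0
    rw [norm_zero, mul_zero]
    linarith
  · have hn : 0 < ‖w‖ := norm_pos_iff.2 hw0
    have := hcg (‖w‖⁻¹ • w) ⟨S.smul_mem _ hw, by simp [norm_smul, hn.ne']⟩
    rwa [hsmul _ (inv_pos.2 hn), le_inv_mul_iff₀ hn, mul_comm] at this

section Flow

variable {K : ProperCone ℝ E} {X : Set E} {φ : ℝ → E → E} {v x y : E} {t : ℝ}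
variable (hφ0 : ∀ ξ ∈ X, φ 0 ξ = ξ)
  (hmono : ∀ ξ₁ ∈ X, ∀ ξ₂ ∈ X, ∀ t : ℝ, 0 < t →
    ξ₁ - ξ₂ ∈ K → ξ₁ ≠ ξ₂ → φ t ξ₁ - φ t ξ₂ ∈ interior (K : Set E))

include hφ0 hmono in
lemma flow_sub_mem (hx : x ∈ X) (hy : y ∈ X) (ht : 0 ≤ t) (h : x - y ∈ K) :
    φ t x - φ t y ∈ K := by
  rcases ht.eq_or_lt with rfl | ht
  · rwa [hφ0 x hx, hφ0 y hy]
  rcases eq_or_ne x y with rfl | hxy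
  · simp
  · exact interior_subset (hmono x hx y hy t ht h hxy)

variable (hXtrans : ∀ x ∈ X, ∀ lam : ℝ, x + lam • v ∈ X)
  (htrans : ∀ ξ ∈ X, ∀ lam t : ℝ, 0 ≤ t → φ t (ξ + lam • v) = φ t ξ + lam • v)
  (hK : ∀ x ∈ K, -x ∈ K → x = 0) (hv : v ∈ interior (K : Set E)) (hv0 : v ≠ 0)
include hmono hXtrans htrans hK hv hv0

include hφ0 in
lemma upperGauge_flow_sub_le (hx : x ∈ X) (hy : y ∈ X) (ht : 0 ≤ t) :
    upperGauge K v (φ t x - φ t y) ≤ upperGauge K v (x - y) := by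
  set μ := upperGauge K v (x - y)
  have h := flow_sub_mem hφ0 hmono (hXtrans y hy μ) hx ht <| by
    convert upperGauge_smul_sub_mem hK hv hv0 (x - y) using 1
    abel
  rw [htrans y hy μ t ht] at h
  rw [upperGauge_le_iff hK hv hv0]
  convert h using 1
  abel

lemma upperGauge_flow_sub_lt (hx : x ∈ X) (hy : y ∈ X) (ht : 0 < t)
    (hxy : x - y ≠ upperGauge K v (x - y) • v) :
    upperGauge K v (φ t x - φ t y) < upperGauge K v (x - y) := by
  set μ := upperGauge K v (x - y)
  have hmem : y + μ • v - x ∈ K := by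
    convert upperGauge_smul_sub_mem hK hv hv0 (x - y) using 1
    abel
  have h := hmono (y + μ • v) (hXtrans y hy μ) x hx t ht hmem fun h => hxy (by rw [← h]; abel)
  rw [htrans y hy μ t ht.le] at h
  exact upperGauge_lt_of_mem_interior hK hv hv0 (by convert h using 1; abel)

include hφ0 in
lemma oscGauge_flow_sub_le (hx : x ∈ X) (hy : y ∈ X) (ht : 0 ≤ t) :
    oscGauge K v (φ t x - φ t y) ≤ oscGauge K v (x - y) := by
  rw [oscGauge, oscGauge, neg_sub, neg_sub]
  linarith [upperGauge_flow_sub_le hφ0 hmono hXtrans htrans hK hv hv0 hx hy ht,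
    upperGauge_flow_sub_le hφ0 hmono hXtrans htrans hK hv hv0 hy hx ht]

lemma oscGauge_flow_sub_lt (hx : x ∈ X) (hy : y ∈ X) (ht : 0 < t)
    (hpos : 0 < oscGauge K v (x - y)) :
    oscGauge K v (φ t x - φ t y) < oscGauge K v (x - y) := by
  have hne : ∀ a b : E, 0 < oscGauge K v (a - b) → a - b ≠ upperGauge K v (a - b) • v :=
    fun a b h heq => by rw [heq, oscGauge_smul_self hK hv hv0] at h; exact h.false
  have hpos' : 0 < oscGauge K v (y - x) := by rwa [← neg_sub, oscGauge_neg]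
  rw [oscGauge, oscGauge, neg_sub, neg_sub]
  linarith [upperGauge_flow_sub_lt hmono hXtrans htrans hK hv hv0 hx hy ht (hne x y hpos),
    upperGauge_flow_sub_lt hmono hXtrans htrans hK hv hv0 hy hx ht (hne y x hpos')]

end Flow

section Semiflow

variable {X : Set E} {f : E → E}

lemma eqOn_Ici_of_hasDerivWithinAt (hf : LocallyLipschitzOn X f) {g h : ℝ → E} {a : ℝ}
    (hg : ∀ t ∈ Ici a, HasDerivWithinAt g (f (g t)) (Ici a) t ∧ g t ∈ X)
    (hh : ∀ t ∈ Ici a, HasDerivWithinAt h (f (h t)) (Ici a) t ∧ h t ∈ X)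
    (ha : g a = h a) : EqOn g h (Ici a) := by
  have hcont : ∀ k : ℝ → E, (∀ t ∈ Ici a, HasDerivWithinAt k (f (k t)) (Ici a) t ∧ k t ∈ X) →
      ∀ b, ContinuousOn k (Icc a b) := fun k hk b t ht =>
    (hk t ht.1).1.continuousWithinAt.mono Icc_subset_Ici_self
  intro b hb
  refine IsClosed.Icc_subset_of_forall_mem_nhdsWithin (s := {t | g t = h t}) ?_ ha ?_ ⟨hb, le_rfl⟩
  · rw [inter_comm]
    exact ((hcont g hg b).prodMk (hcont h hh b)).preimage_isClosed_of_isClosed isClosed_Icc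
      isClosed_diagonal
  rintro x ⟨hx, hxa, -⟩
  obtain ⟨L, U, hU, hLip⟩ := hf (hg x hxa).2
  have hstay : ∀ k : ℝ → E, (∀ t ∈ Ici a, HasDerivWithinAt k (f (k t)) (Ici a) t ∧ k t ∈ X) →
      k x = g x → ∀ᶠ t in 𝓝[≥] x, k t ∈ U := fun k hk hkx => by
    have : Tendsto k (𝓝[Ici a] x) (𝓝[X] (g x)) := tendsto_nhdsWithin_iff.2
      ⟨hkx ▸ (hk x hxa).1.continuousWithinAt,
        eventually_mem_nhdsWithin.mono fun t ht => (hk t ht).2⟩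
    exact nhdsWithin_mono _ (Ici_subset_Ici.2 hxa) (this hU)
  obtain ⟨u, hxu, hsub⟩ :=
    mem_nhdsGE_iff_exists_Ico_subset.1 ((hstay g hg rfl).and (hstay h hh hx.symm))
  have hderiv : ∀ k : ℝ → E, (∀ t ∈ Ici a, HasDerivWithinAt k (f (k t)) (Ici a) t ∧ k t ∈ X) →
      ∀ t ∈ Ico x u, HasDerivWithinAt k (f (k t)) (Ici t) t := fun k hk t ht =>
    (hk t (hxa.trans ht.1)).1.mono (Ici_subset_Ici.2 (hxa.trans ht.1))
  have heq : EqOn g h (Icc x u) :=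
    ODE_solution_unique_of_mem_Icc_right (v := fun _ => f) (s := fun _ => U) (fun _ _ => hLip)
      ((hcont g hg u).mono (Icc_subset_Icc_left hxa)) (hderiv g hg) (fun t ht => (hsub ht).1)
      ((hcont h hh u).mono (Icc_subset_Icc_left hxa)) (hderiv h hh) (fun t ht => (hsub ht).2) hx
  exact mem_of_superset (Ioo_mem_nhdsGT hxu) fun t ht => heq (Ioo_subset_Icc_self ht)

lemma flow_add {φ : ℝ → E → E} (hf : LocallyLipschitzOn X f) (hφ0 : ∀ ξ ∈ X, φ 0 ξ = ξ)
    (hφX : ∀ ξ ∈ X, ∀ t : ℝ, 0 ≤ t → φ t ξ ∈ X)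
    (hφode : ∀ ξ ∈ X, ∀ t : ℝ, 0 ≤ t →
      HasDerivWithinAt (fun s => φ s ξ) (f (φ t ξ)) (Ici 0) t)
    {ξ : E} (hξ : ξ ∈ X) {s t : ℝ} (hs : 0 ≤ s) (ht : 0 ≤ t) :
    φ (s + t) ξ = φ t (φ s ξ) := by
  have hsX := hφX ξ hξ s hs
  refine eqOn_Ici_of_hasDerivWithinAt hf (g := fun t => φ (s + t) ξ) (h := fun t => φ t (φ s ξ))
    (fun t ht => ⟨?_, hφX ξ hξ _ (add_nonneg hs ht)⟩)
    (fun t ht => ⟨hφode _ hsX t ht, hφX _ hsX t ht⟩) (by simp [hφ0 _ hsX]) ht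
  have hshift : MapsTo (s + ·) (Ici 0) (Ici 0) := fun t ht => add_nonneg hs ht
  simpa [Function.comp_def] using (hφode ξ hξ (s + t) (add_nonneg hs ht)).scomp t
    ((hasDerivAt_id t).const_add s).hasDerivWithinAt hshift

end Semiflow

lemma AntitoneOn.exists_tendsto_atTop {g : ℝ → ℝ} {a b : ℝ} (hg : AntitoneOn g (Ici a))
    (hb : ∀ t ∈ Ici a, b ≤ g t) : ∃ L, Tendsto g atTop (𝓝 L) := by
  have hanti : Antitone fun t => g (max a t) := fun x y hxy =>
    hg (le_max_left a x) (le_max_left a y) (max_le_max le_rfl hxy)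
  refine ⟨_, (tendsto_atTop_ciInf hanti ⟨b, ?_⟩).congr' ?_⟩
  · rintro _ ⟨t, rfl⟩
    exact hb _ (le_max_left a t)
  · filter_upwards [eventually_ge_atTop a] with t ht
    rw [max_eq_right ht]

section Projection

variable {n : ℕ} {v : EuclideanSpace ℝ (Fin n)}

lemma inner_piProj (hv : ‖v‖ = 1) (x : EuclideanSpace ℝ (Fin n)) :
    (inner ℝ v (piProj v x) : ℝ) = 0 := by
  rw [piProj, inner_sub_right, real_inner_smul_right, real_inner_self_eq_norm_sq, hv]
  ring

lemma piProj_add_smul (hv : ‖v‖ = 1) (x : EuclideanSpace ℝ (Fin n)) (c : ℝ) :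
    piProj v (x + c • v) = piProj v x := by
  rw [piProj, piProj, inner_add_right, real_inner_smul_right, real_inner_self_eq_norm_sq, hv]
  module

lemma piProj_add_inner_smul (x : EuclideanSpace ℝ (Fin n)) :
    piProj v x + (inner ℝ v x : ℝ) • v = x :=
  sub_add_cancel x _

lemma piProj_sub_piProj (x y : EuclideanSpace ℝ (Fin n)) :
    piProj v x - piProj v y = x - y + (inner ℝ v y - inner ℝ v x : ℝ) • v := by
  rw [piProj, piProj]
  module

lemma hasDerivWithinAt_piProj {g : ℝ → EuclideanSpace ℝ (Fin n)} {g' : EuclideanSpace ℝ (Fin n)}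
    {s : Set ℝ} {t : ℝ} (hg : HasDerivWithinAt g g' s t) :
    HasDerivWithinAt (fun t => piProj v (g t)) (piProj v g') s t :=
  hg.sub (((innerSL ℝ v).hasFDerivAt.comp_hasDerivWithinAt t hg).smul_const v)

lemma piProj_eq_zero_of_hasDerivWithinAt {g : ℝ → EuclideanSpace ℝ (Fin n)}
    {g' : EuclideanSpace ℝ (Fin n)} {a : ℝ} (hg : HasDerivWithinAt g g' (Ici a) a)
    (hconst : ∀ s ∈ Ici a, piProj v (g s) = piProj v (g a)) : piProj v g' = 0 :=
  (uniqueDiffOn_Ici a a self_mem_Ici).eq_deriv _ (hasDerivWithinAt_piProj hg)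
    ((hasDerivWithinAt_const a _ _).congr hconst (hconst a self_mem_Ici))

end Projection

section OmegaLimit

variable {n : ℕ} {K : ProperCone ℝ (EuclideanSpace ℝ (Fin n))}
  {X : Set (EuclideanSpace ℝ (Fin n))}
  {f : EuclideanSpace ℝ (Fin n) → EuclideanSpace ℝ (Fin n)}
  {φ : ℝ → EuclideanSpace ℝ (Fin n) → EuclideanSpace ℝ (Fin n)}
  {v ξ p : EuclideanSpace ℝ (Fin n)}
variable (hK : ∀ x ∈ K, -x ∈ K → x = 0) (hv : v ∈ interior (K : Set (EuclideanSpace ℝ (Fin n))))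
  (hvnorm : ‖v‖ = 1)

include hK hv hvnorm in
lemma oscGauge_piProj_sub (x y : EuclideanSpace ℝ (Fin n)) :
    oscGauge K v (piProj v x - piProj v y) = oscGauge K v (x - y) := by
  rw [piProj_sub_piProj, oscGauge_add_smul hK hv (ne_zero_of_norm_ne_zero (hvnorm ▸ one_ne_zero))]

include hK hv hvnorm in
lemma exists_pos_mul_norm_piProj_sub_le :
    ∃ c > 0, ∀ x y, c * ‖piProj v x - piProj v y‖ ≤ oscGauge K v (x - y) := by
  have hv0 : v ≠ 0 := ne_zero_of_norm_ne_zero (hvnorm ▸ one_ne_zero)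
  obtain ⟨c, hc, hle⟩ := exists_pos_mul_norm_le_of_continuous (continuous_oscGauge hK hv hv0)
    (fun a ha w => oscGauge_smul hK hv hv0 ha w) (ℝ ∙ v)ᗮ fun w hw hw0 => by
      refine (oscGauge_nonneg hK hv hv0 w).lt_of_ne' fun h => hw0 ?_
      have hw' := eq_smul_of_oscGauge_eq_zero hK hv hv0 h
      rw [Submodule.mem_orthogonal_singleton_iff_inner_right, hw', real_inner_smul_right,
        real_inner_self_eq_norm_sq, hvnorm, one_pow, mul_one] at hw
      rw [hw', hw, zero_smul]
  refine ⟨c, hc, fun x y => ?_⟩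
  rw [← oscGauge_piProj_sub hK hv hvnorm]
  refine hle _ (Submodule.mem_orthogonal_singleton_iff_inner_right.2 ?_)
  rw [inner_sub_right, inner_piProj hvnorm, inner_piProj hvnorm, sub_zero]

variable (hXclosed : IsClosed X) (hXtrans : ∀ x ∈ X, ∀ lam : ℝ, x + lam • v ∈ X)
  (hf : LocallyLipschitzOn X f) (hφ0 : ∀ ξ ∈ X, φ 0 ξ = ξ)
  (hφX : ∀ ξ ∈ X, ∀ t : ℝ, 0 ≤ t → φ t ξ ∈ X)
  (hφode : ∀ ξ ∈ X, ∀ t : ℝ, 0 ≤ t → HasDerivWithinAt (fun s => φ s ξ) (f (φ t ξ)) (Ici 0) t)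
  (hmono : ∀ ξ₁ ∈ X, ∀ ξ₂ ∈ X, ∀ t : ℝ, 0 < t →
    ξ₁ - ξ₂ ∈ K → ξ₁ ≠ ξ₂ → φ t ξ₁ - φ t ξ₂ ∈ interior (K : Set (EuclideanSpace ℝ (Fin n))))
  (htrans : ∀ ξ ∈ X, ∀ lam t : ℝ, 0 ≤ t → φ t (ξ + lam • v) = φ t ξ + lam • v)

include hXtrans in
lemma piProj_mem {x : EuclideanSpace ℝ (Fin n)} (hx : x ∈ X) : piProj v x ∈ X := by
  rw [piProj, sub_eq_add_neg, ← neg_smul]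
  exact hXtrans x hx _

include hXclosed hXtrans hφX in
lemma mem_of_tendsto_piProj_flow (hξ : ξ ∈ X) {tn : ℕ → ℝ} (htn0 : ∀ m, 0 ≤ tn m)
    (hp : Tendsto (fun m => piProj v (φ (tn m) ξ)) atTop (𝓝 p)) : p ∈ X :=
  hXclosed.mem_of_tendsto hp
    (Eventually.of_forall fun m => piProj_mem hXtrans (hφX ξ hξ _ (htn0 m)))

include hvnorm hXtrans hf hφ0 hφX hφode htrans in
lemma piProj_flow_add (hξ : ξ ∈ X) {s t : ℝ} (hs : 0 ≤ s) (ht : 0 ≤ t) :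
    piProj v (φ (s + t) ξ) = piProj v (φ t (piProj v (φ s ξ))) := by
  have hsX := hφX ξ hξ s hs
  calc piProj v (φ (s + t) ξ)
      = piProj v (φ t (piProj v (φ s ξ) + (inner ℝ v (φ s ξ) : ℝ) • v)) := by
        rw [piProj_add_inner_smul, flow_add hf hφ0 hφX hφode hξ hs ht]
    _ = piProj v (φ t (piProj v (φ s ξ))) := by
        rw [htrans _ (piProj_mem hXtrans hsX) _ t ht, piProj_add_smul hvnorm]

include hK hv hvnorm hXtrans hφ0 hmono htrans in
lemma continuousOn_piProj_flow {t : ℝ} (ht : 0 ≤ t) :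
    ContinuousOn (fun x => piProj v (φ t x)) X := by
  have hv0 : v ≠ 0 := ne_zero_of_norm_ne_zero (hvnorm ▸ one_ne_zero)
  obtain ⟨c, hc, hle⟩ := exists_pos_mul_norm_piProj_sub_le hK hv hvnorm
  obtain ⟨ε, hε, hball⟩ := Metric.nhds_basis_closedBall.mem_iff.1 (mem_interior_iff_mem_nhds.1 hv)
  refine (LipschitzOnWith.of_dist_le' (K := 2 / ε / c) fun x hx y hy => ?_).continuousOn
  rw [dist_eq_norm, dist_eq_norm]
  calc ‖piProj v (φ t x) - piProj v (φ t y)‖ ≤ oscGauge K v (φ t x - φ t y) / c := by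
        rw [le_div_iff₀' hc]
        exact hle _ _
    _ ≤ oscGauge K v (x - y) / c := by
        gcongr
        exact oscGauge_flow_sub_le hφ0 hmono hXtrans htrans hK hv hv0 hx hy ht
    _ ≤ 2 / ε * ‖x - y‖ / c := by
        gcongr
        exact oscGauge_le hK hv hv0 hε hball _
    _ = 2 / ε / c * ‖x - y‖ := by ring

section Trajectory

include hK hv hvnorm hXtrans hf hφ0 hφX hφode hmono htrans

lemma antitoneOn_oscGauge_flow_shift (hξ : ξ ∈ X) {s : ℝ} (hs : 0 ≤ s) :
    AntitoneOn (fun t => oscGauge K v (φ (t + s) ξ - φ t ξ)) (Ici 0) := by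
  intro t₁ (ht₁ : 0 ≤ t₁) t₂ _ h
  obtain ⟨u, hu, rfl⟩ : ∃ u, 0 ≤ u ∧ t₂ = t₁ + u := ⟨t₂ - t₁, sub_nonneg.2 h, by ring⟩
  dsimp only
  rw [add_right_comm, flow_add hf hφ0 hφX hφode hξ (add_nonneg ht₁ hs) hu,
    flow_add hf hφ0 hφX hφode hξ ht₁ hu]
  exact oscGauge_flow_sub_le hφ0 hmono hXtrans htrans hK hv
    (ne_zero_of_norm_ne_zero (hvnorm ▸ one_ne_zero)) (hφX _ hξ _ (add_nonneg ht₁ hs))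
    (hφX _ hξ _ ht₁) hu

lemma oscGauge_flow_sub_eq_of_tendsto (hξ : ξ ∈ X) {s L : ℝ} (hs : 0 ≤ s)
    (hL : Tendsto (fun t => oscGauge K v (φ (t + s) ξ - φ t ξ)) atTop (𝓝 L))
    {τ : ℕ → ℝ} (hτ0 : ∀ k, 0 ≤ τ k) (hτ : Tendsto τ atTop atTop)
    {q : EuclideanSpace ℝ (Fin n)} (hqX : q ∈ X) (hpX : p ∈ X)
    (hq : Tendsto (fun k => piProj v (φ (τ k + s) ξ)) atTop (𝓝 q))
    (hp : Tendsto (fun k => piProj v (φ (τ k) ξ)) atTop (𝓝 p)) {u : ℝ} (hu : 0 ≤ u) :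
    oscGauge K v (φ u q - φ u p) = L := by
  have hv0 : v ≠ 0 := ne_zero_of_norm_ne_zero (hvnorm ▸ one_ne_zero)
  have hτs : ∀ k, 0 ≤ τ k + s := fun k => add_nonneg (hτ0 k) hs
  have hflow : ∀ {r : EuclideanSpace ℝ (Fin n)} {σ : ℕ → ℝ}, r ∈ X → (∀ k, 0 ≤ σ k) →
      Tendsto (fun k => piProj v (φ (σ k) ξ)) atTop (𝓝 r) →
      Tendsto (fun k => piProj v (φ u (piProj v (φ (σ k) ξ)))) atTop (𝓝 (piProj v (φ u r))) :=
    fun hr hσ0 hσ => (continuousOn_piProj_flow hK hv hvnorm hXtrans hφ0 hmono htrans hu _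
      hr).tendsto.comp (tendsto_nhdsWithin_iff.2
        ⟨hσ, Eventually.of_forall fun k => piProj_mem hXtrans (hφX ξ hξ _ (hσ0 k))⟩)
  have hlim := ((continuous_oscGauge hK hv hv0).tendsto _).comp
    ((hflow hqX hτs hq).sub (hflow hpX hτ0 hp))
  rw [oscGauge_piProj_sub hK hv hvnorm] at hlim
  refine tendsto_nhds_unique (hlim.congr fun k => ?_)
    (hL.comp (tendsto_atTop_add_const_right _ u hτ))
  simp only [Function.comp_apply]
  rw [← piProj_flow_add hvnorm hXtrans hf hφ0 hφX hφode htrans hξ (hτs k) hu,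
    ← piProj_flow_add hvnorm hXtrans hf hφ0 hφX hφode htrans hξ (hτ0 k) hu,
    oscGauge_piProj_sub hK hv hvnorm, add_right_comm]

include hXclosed in
lemma tendsto_oscGauge_flow_shift (hξ : ξ ∈ X) {M : ℝ}
    (hM : ∀ t : ℝ, 0 ≤ t → ‖piProj v (φ t ξ)‖ ≤ M) {tn : ℕ → ℝ} (htn0 : ∀ m, 0 ≤ tn m)
    (htn : Tendsto tn atTop atTop) (hp : Tendsto (fun m => piProj v (φ (tn m) ξ)) atTop (𝓝 p))
    {s : ℝ} (hs : 0 ≤ s) :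
    Tendsto (fun m => oscGauge K v (φ (tn m + s) ξ - φ (tn m) ξ)) atTop (𝓝 0) := by
  have hv0 : v ≠ 0 := ne_zero_of_norm_ne_zero (hvnorm ▸ one_ne_zero)
  have hpX := mem_of_tendsto_piProj_flow hXclosed hXtrans hφX hξ htn0 hp
  obtain ⟨L, hL⟩ := (antitoneOn_oscGauge_flow_shift hK hv hvnorm hXtrans hf hφ0 hφX hφode hmono
    htrans hξ hs).exists_tendsto_atTop fun t _ => oscGauge_nonneg hK hv hv0 _
  have hs' : ∀ m, 0 ≤ tn m + s := fun m => add_nonneg (htn0 m) hs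
  obtain ⟨q, ⟨hqX, -⟩, σ, hσ, hq⟩ := ((isCompact_closedBall 0 M).inter_left hXclosed).tendsto_subseq
    (x := fun m => piProj v (φ (tn m + s) ξ)) fun m =>
      ⟨piProj_mem hXtrans (hφX ξ hξ _ (hs' m)), mem_closedBall_zero_iff.2 (hM _ (hs' m))⟩
  have heq : ∀ u, 0 ≤ u → oscGauge K v (φ u q - φ u p) = L := fun u hu =>
    oscGauge_flow_sub_eq_of_tendsto hK hv hvnorm hXtrans hf hφ0 hφX hφode hmono htrans hξ hs hL
      (fun k => htn0 (σ k)) (htn.comp hσ.tendsto_atTop) hqX hpX hq (hp.comp hσ.tendsto_atTop) hu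
  have hqp : oscGauge K v (q - p) = L := by
    simpa only [hφ0 q hqX, hφ0 p hpX] using heq 0 le_rfl
  -- strict contraction at time 1 is incompatible with a positive limit
  have hL0 : L = 0 := by
    refine le_antisymm (not_lt.1 fun hpos => ?_)
      (ge_of_tendsto' hL fun t => oscGauge_nonneg hK hv hv0 _)
    have := oscGauge_flow_sub_lt hmono hXtrans htrans hK hv hv0 hqX hpX one_pos (hqp ▸ hpos)
    rw [heq 1 zero_le_one, hqp] at this
    exact this.false
  exact hL0 ▸ hL.comp htn

include hXclosed in
lemma tendsto_piProj_flow_shift (hξ : ξ ∈ X) {M : ℝ}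
    (hM : ∀ t : ℝ, 0 ≤ t → ‖piProj v (φ t ξ)‖ ≤ M) {tn : ℕ → ℝ} (htn0 : ∀ m, 0 ≤ tn m)
    (htn : Tendsto tn atTop atTop) (hp : Tendsto (fun m => piProj v (φ (tn m) ξ)) atTop (𝓝 p))
    {s : ℝ} (hs : 0 ≤ s) : Tendsto (fun m => piProj v (φ (tn m + s) ξ)) atTop (𝓝 p) := by
  obtain ⟨c, hc, hle⟩ := exists_pos_mul_norm_piProj_sub_le hK hv hvnorm
  have hdiff : Tendsto (fun m => piProj v (φ (tn m + s) ξ) - piProj v (φ (tn m) ξ)) atTop (𝓝 0) :=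
    squeeze_zero_norm (fun m => (le_div_iff₀' hc).2 (hle _ _)) <| by
      simpa using (tendsto_oscGauge_flow_shift hK hv hvnorm hXclosed hXtrans hf hφ0 hφX hφode hmono
        htrans hξ hM htn0 htn hp hs).div_const c
  simpa using hdiff.add hp

include hXclosed in
lemma piProj_flow_eq_self (hξ : ξ ∈ X) {M : ℝ}
    (hM : ∀ t : ℝ, 0 ≤ t → ‖piProj v (φ t ξ)‖ ≤ M) {tn : ℕ → ℝ} (htn0 : ∀ m, 0 ≤ tn m)
    (htn : Tendsto tn atTop atTop) (hp : Tendsto (fun m => piProj v (φ (tn m) ξ)) atTop (𝓝 p))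
    {s : ℝ} (hs : 0 ≤ s) : piProj v (φ s p) = p := by
  refine tendsto_nhds_unique ((continuousOn_piProj_flow hK hv hvnorm hXtrans hφ0 hmono htrans hs p
    (mem_of_tendsto_piProj_flow hXclosed hXtrans hφX hξ htn0 hp)).tendsto.comp
      (tendsto_nhdsWithin_iff.2 ⟨hp, Eventually.of_forall fun m =>
        piProj_mem hXtrans (hφX ξ hξ _ (htn0 m))⟩)) ?_
  refine (tendsto_piProj_flow_shift hK hv hvnorm hXclosed hXtrans hf hφ0 hφX hφode hmono htrans hξ
    hM htn0 htn hp hs).congr fun m => ?_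
  exact piProj_flow_add hvnorm hXtrans hf hφ0 hφX hφode htrans hξ (htn0 m) hs

end Trajectory

end OmegaLimit

theorem stmt14_general {n : ℕ} (K X : Set (EuclideanSpace ℝ (Fin n)))
    (f : EuclideanSpace ℝ (Fin n) → EuclideanSpace ℝ (Fin n))
    (φ : ℝ → EuclideanSpace ℝ (Fin n) → EuclideanSpace ℝ (Fin n))
    (v : EuclideanSpace ℝ (Fin n))
    -- K is a closed pointed convex cone with nonempty interior
    (hKclosed : IsClosed K) (hKconv : Convex ℝ K)
    (hKcone : ∀ c : ℝ, 0 ≤ c → ∀ x ∈ K, c • x ∈ K)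
    (hKpointed : ∀ x ∈ K, -x ∈ K → x = 0)
    (hv : v ∈ interior K) (hvnorm : ‖v‖ = 1)
    -- X is closed, the closure of its interior, and invariant under translations by v
    (hXclosed : IsClosed X)
    (hXtrans : ∀ x ∈ X, ∀ lam : ℝ, x + lam • v ∈ X)
    -- f is locally Lipschitz on X
    (hf : ∀ x ∈ X, ∃ L : NNReal, ∃ U ∈ nhdsWithin x X, LipschitzOnWith L f U)
    -- φ is the forward complete flow of ẋ = f(x) on X
    (hφ0 : ∀ ξ ∈ X, φ 0 ξ = ξ)
    (hφX : ∀ ξ ∈ X, ∀ t : ℝ, 0 ≤ t → φ t ξ ∈ X)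
    (hφode : ∀ ξ ∈ X, ∀ t : ℝ, 0 ≤ t →
      HasDerivWithinAt (fun s => φ s ξ) (f (φ t ξ)) (Set.Ici 0) t)
    -- strong monotonicity: ξ₁ ≻ ξ₂ ⟹ φ_t(ξ₁) ≫ φ_t(ξ₂) for t > 0
    (hmono : ∀ ξ₁ ∈ X, ∀ ξ₂ ∈ X, ∀ t : ℝ, 0 < t →
      ξ₁ - ξ₂ ∈ K → ξ₁ ≠ ξ₂ → φ t ξ₁ - φ t ξ₂ ∈ interior K)
    -- translation invariance along v
    (htrans : ∀ ξ ∈ X, ∀ lam t : ℝ, 0 ≤ t → φ t (ξ + lam • v) = φ t ξ + lam • v)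
    -- the solution through ξ is bounded modulo v
    (ξ : EuclideanSpace ℝ (Fin n)) (hξ : ξ ∈ X)
    (hbd : ∃ M : ℝ, ∀ t : ℝ, 0 ≤ t → ‖piProj v (φ t ξ)‖ ≤ M)
    -- p is an ω-limit point of the projected trajectory
    (tn : ℕ → ℝ) (htn0 : ∀ m : ℕ, 0 ≤ tn m) (htn : Tendsto tn atTop atTop)
    (p : EuclideanSpace ℝ (Fin n))
    (hp : Tendsto (fun m : ℕ => piProj v (φ (tn m) ξ)) atTop (𝓝 p)) :
    p ∈ X ∧ (inner ℝ v p : ℝ) = 0 ∧ ∃ r : ℝ, f p = r • v := by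
  obtain ⟨M, hM⟩ := hbd
  let C := ProperCone.ofConvex K ⟨v, interior_subset hv⟩ hKclosed hKconv hKcone
  have hpX : p ∈ X := mem_of_tendsto_piProj_flow hXclosed hXtrans hφX hξ htn0 hp
  have hpv : (inner ℝ v p : ℝ) = 0 :=
    (isClosed_eq (continuous_const.inner continuous_id) continuous_const).mem_of_tendsto hp
      (Eventually.of_forall fun m => inner_piProj hvnorm _)
  have hfix : ∀ s, 0 ≤ s → piProj v (φ s p) = p := fun s hs =>
    piProj_flow_eq_self (K := C) hKpointed hv hvnorm hXclosed hXtrans hf hφ0 hφX hφode hmono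
      htrans hξ hM htn0 htn hp hs
  have hproj := piProj_eq_zero_of_hasDerivWithinAt (hφode p hpX 0 le_rfl) fun s hs =>
    (hfix s hs).trans (hfix 0 le_rfl).symm
  rw [hφ0 p hpX] at hproj
  exact ⟨hpX, hpv, _, sub_eq_zero.1 hproj⟩

/-- for a strongly monotone, forward complete system `ẋ = f(x)` on `X`,
translation invariant along the unit vector `v ∈ interior K`, with `X` closed and
invariant under translations by `v`, and a solution `φ_t(ξ)` bounded modulo `v`, every
ω-limit point of the projected trajectory is an equilibrium of the projected system:
if `t_n → ∞` and `π_v(φ_{t_n}(ξ)) → p`, then `p ∈ X ∩ v^⊥` and `f(p) ∈ span{v}`. -/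
theorem stmt14 {n : ℕ} (K X : Set (EuclideanSpace ℝ (Fin n)))
    (f : EuclideanSpace ℝ (Fin n) → EuclideanSpace ℝ (Fin n))
    (φ : ℝ → EuclideanSpace ℝ (Fin n) → EuclideanSpace ℝ (Fin n))
    (v : EuclideanSpace ℝ (Fin n))
    -- K is a closed pointed convex cone with nonempty interior
    (hKclosed : IsClosed K) (hKconv : Convex ℝ K)
    (hKcone : ∀ c : ℝ, 0 ≤ c → ∀ x ∈ K, c • x ∈ K)
    (hKpointed : ∀ x ∈ K, -x ∈ K → x = 0)
    (hv : v ∈ interior K) (hvnorm : ‖v‖ = 1)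
    -- X is closed, the closure of its interior, and invariant under translations by v
    (hXclosed : IsClosed X) (hXreg : X = closure (interior X))
    (hXtrans : ∀ x ∈ X, ∀ lam : ℝ, x + lam • v ∈ X)
    -- f is locally Lipschitz on X
    (hf : ∀ x ∈ X, ∃ L : NNReal, ∃ U ∈ nhdsWithin x X, LipschitzOnWith L f U)
    -- φ is the forward complete flow of ẋ = f(x) on X
    (hφ0 : ∀ ξ ∈ X, φ 0 ξ = ξ)
    (hφX : ∀ ξ ∈ X, ∀ t : ℝ, 0 ≤ t → φ t ξ ∈ X)
    (hφode : ∀ ξ ∈ X, ∀ t : ℝ, 0 ≤ t →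
      HasDerivWithinAt (fun s => φ s ξ) (f (φ t ξ)) (Set.Ici 0) t)
    -- strong monotonicity: ξ₁ ≻ ξ₂ ⟹ φ_t(ξ₁) ≫ φ_t(ξ₂) for t > 0
    (hmono : ∀ ξ₁ ∈ X, ∀ ξ₂ ∈ X, ∀ t : ℝ, 0 < t →
      ξ₁ - ξ₂ ∈ K → ξ₁ ≠ ξ₂ → φ t ξ₁ - φ t ξ₂ ∈ interior K)
    -- translation invariance along v
    (htrans : ∀ ξ ∈ X, ∀ lam t : ℝ, 0 ≤ t → φ t (ξ + lam • v) = φ t ξ + lam • v)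
    -- the solution through ξ is bounded modulo v
    (ξ : EuclideanSpace ℝ (Fin n)) (hξ : ξ ∈ X)
    (hbd : ∃ M : ℝ, ∀ t : ℝ, 0 ≤ t → ‖piProj v (φ t ξ)‖ ≤ M)
    -- p is an ω-limit point of the projected trajectory
    (tn : ℕ → ℝ) (htn0 : ∀ m : ℕ, 0 ≤ tn m) (htn : Tendsto tn atTop atTop)
    (p : EuclideanSpace ℝ (Fin n))
    (hp : Tendsto (fun m : ℕ => piProj v (φ (tn m) ξ)) atTop (𝓝 p)) :
    p ∈ X ∧ (inner ℝ v p : ℝ) = 0 ∧ ∃ r : ℝ, f p = r • v :=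
  stmt14_general K X f φ v hKclosed hKconv hKcone hKpointed hv hvnorm hXclosed hXtrans hf hφ0 hφX
    hφode hmono htrans ξ hξ hbd tn htn0 htn p hp
end

section
/- Fix σ ∈ ℝⁿ_{≥0}. (i) For each x₀ ∈ X_σ, let S(t) be the solution of Ṡ = ΓR(S) with S(0) = σ + Γx₀, and define x(t) := x₀ + ∫₀ᵗ R(S(τ)) dτ; then x(t) is the unique solution of ẋ = R(σ + Γx) with x(0) = x₀, it satisfies S(t) = σ + Γx(t) and x(t) ∈ X_σ for all t ≥ 0, and is defined for all t ≥ 0 (the extent system is forward complete on X_σ). (ii) If in addition every solution of Ṡ = ΓR(S) on ℝⁿ_{≥0} is bounded, then for every solution x(t) of ẋ = R(σ + Γx) on X_σ the function t ↦ Γx(t) is bounded on [0, ∞). -/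
/-! Integrating the reaction rates along a species trajectory `S` gives an extent `x` with
`d/dt (σ + Γ x) = Γ R(S) = Ṡ`, so `S = σ + Γ x` (both start at `σ + Γ x₀`); hence `x`
solves the extent system and stays in `X_σ` as long as `S` is defined, i.e. for all `t ≥ 0`.
Uniqueness holds because `x ↦ R(σ + Γ x)` is locally Lipschitz on `X_σ`. Conversely `σ + Γ x`
is a species trajectory for every extent solution `x`, which gives (ii). -/

open Filter Topology Set

variable {E F : Type*} [NormedAddCommGroup E] [NormedSpace ℝ E]
  [NormedAddCommGroup F] [NormedSpace ℝ F]

lemma LocallyLipschitzOn.comp_lipschitzWith {α β γ : Type*} [PseudoEMetricSpace α]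
    [PseudoEMetricSpace β] [PseudoEMetricSpace γ] {f : β → γ} {g : α → β} {s : Set β}
    {K : NNReal} (hf : LocallyLipschitzOn s f) (hg : LipschitzWith K g) :
    LocallyLipschitzOn (g ⁻¹' s) (f ∘ g) := by
  intro x hx
  obtain ⟨L, t, ht, hft⟩ := hf hx
  have hgx : Tendsto g (𝓝[g ⁻¹' s] x) (𝓝[s] g x) :=
    hg.continuous.continuousWithinAt.tendsto_nhdsWithin (mapsTo_preimage g s)
  exact ⟨L * K, g ⁻¹' t, hgx ht, hft.comp hg.lipschitzOnWith (mapsTo_preimage g t)⟩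

lemma ContinuousOn.hasDerivWithinAt_integral_Ici [CompleteSpace F] {g : ℝ → F} {a t : ℝ}
    (hg : ContinuousOn g (Ici a)) (ht : a ≤ t) :
    HasDerivWithinAt (fun u => ∫ τ in a..u, g τ) (g t) (Ici a) t := by
  -- a continuous extension of `g` to `ℝ` reduces this to the FTC for continuous integrands
  set g' : ℝ → F := fun τ => g (max τ a)
  have hg' : Continuous g' :=
    hg.comp_continuous (continuous_id.max continuous_const) fun τ => le_max_right τ a
  have hint : ∀ u ∈ Ici a, ∫ τ in a..u, g τ = ∫ τ in a..u, g' τ := fun u hu =>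
    intervalIntegral.integral_congr fun τ hτ => by
      rw [uIcc_of_le hu] at hτ
      simp only [g', max_eq_left hτ.1]
  have hderiv := (hg'.integral_hasStrictDerivAt a t).hasDerivAt.hasDerivWithinAt (s := Ici a)
  rw [show g' t = g t by simp only [g', max_eq_left ht]] at hderiv
  exact hderiv.congr hint (hint t ht)

lemma eqOn_Ici_of_hasDerivWithinAt_eq {f g f' : ℝ → E} {a : ℝ}
    (hf : ∀ t ∈ Ici a, HasDerivWithinAt f (f' t) (Ici a) t)
    (hg : ∀ t ∈ Ici a, HasDerivWithinAt g (f' t) (Ici a) t) (ha : f a = g a) :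
    EqOn f g (Ici a) := fun T hT =>
  eq_of_has_deriv_right_eq (fun t ht => (hf t ht.1).mono (Ici_subset_Ici.2 ht.1))
    (fun t ht => (hg t ht.1).mono (Ici_subset_Ici.2 ht.1))
    (fun t ht => (hf t ht.1).continuousWithinAt.mono Icc_subset_Ici_self)
    (fun t ht => (hg t ht.1).continuousWithinAt.mono Icc_subset_Ici_self) ha T ⟨hT, le_rfl⟩

def IsForwardSolution (v : E → E) (K : Set E) (y : ℝ → E) : Prop :=
  ∀ t : ℝ, 0 ≤ t → y t ∈ K ∧ HasDerivWithinAt y (v (y t)) (Ici 0) t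

namespace IsForwardSolution

variable {v : E → E} {K : Set E} {y : ℝ → E}

lemma continuousOn (hy : IsForwardSolution v K y) : ContinuousOn y (Ici 0) :=
  fun t ht => (hy t ht).2.continuousWithinAt

lemma hasDerivWithinAt_Ici (hy : IsForwardSolution v K y) {t : ℝ} (ht : 0 ≤ t) :
    HasDerivWithinAt y (v (y t)) (Ici t) t :=
  (hy t ht).2.mono (Ici_subset_Ici.2 ht)

lemma eventually_mem_nhdsGE (hy : IsForwardSolution v K y) {t : ℝ} (ht : 0 ≤ t) {U : Set E}
    (hU : U ∈ 𝓝[K] y t) : ∀ᶠ τ in 𝓝[≥] t, y τ ∈ U := by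
  have hyt : Tendsto y (𝓝[Ici 0] t) (𝓝[K] y t) :=
    tendsto_nhdsWithin_iff.2 ⟨(hy t ht).2.continuousWithinAt,
      eventually_nhdsWithin_of_forall fun τ hτ => (hy τ hτ).1⟩
  exact nhdsWithin_mono t (Ici_subset_Ici.2 ht) (hyt hU)

end IsForwardSolution

namespace LocallyLipschitzOn

variable {v : E → E} {K : Set E} {y z : ℝ → E}

lemma eventuallyEq_nhdsGT_of_isForwardSolution (hv : LocallyLipschitzOn K v)
    (hy : IsForwardSolution v K y) (hz : IsForwardSolution v K z) {t₀ : ℝ} (ht₀ : 0 ≤ t₀)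
    (heq : y t₀ = z t₀) : y =ᶠ[𝓝[>] t₀] z := by
  obtain ⟨L, U, hU, hvU⟩ := hv (hy t₀ ht₀).1
  obtain ⟨b, hb, hbU⟩ := mem_nhdsGE_iff_exists_Ico_subset.1
    ((hy.eventually_mem_nhdsGE ht₀ hU).and (hz.eventually_mem_nhdsGE ht₀ (heq ▸ hU)))
  have hIcc : Icc t₀ b ⊆ Ici 0 := fun t ht => ht₀.trans ht.1
  have hsol : EqOn y z (Icc t₀ b) :=
    ODE_solution_unique_of_mem_Icc_right (v := fun _ => v) (s := fun _ => U) (fun _ _ => hvU)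
      (hy.continuousOn.mono hIcc) (fun t ht => hy.hasDerivWithinAt_Ici (ht₀.trans ht.1))
      (fun t ht => (hbU ht).1)
      (hz.continuousOn.mono hIcc) (fun t ht => hz.hasDerivWithinAt_Ici (ht₀.trans ht.1))
      (fun t ht => (hbU ht).2) heq
  exact mem_of_superset (Ioo_mem_nhdsGT hb) fun t ht => hsol (Ioo_subset_Icc_self ht)

lemma eqOn_Ici_of_isForwardSolution (hv : LocallyLipschitzOn K v)
    (hy : IsForwardSolution v K y) (hz : IsForwardSolution v K z) (h₀ : y 0 = z 0) :
    EqOn y z (Ici 0) := by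
  intro T hT
  have hclosed : IsClosed ({t | y t = z t} ∩ Icc 0 T) := by
    have hyz : ContinuousOn (fun t => (y t, z t)) (Icc 0 T) :=
      (hy.continuousOn.mono Icc_subset_Ici_self).prodMk (hz.continuousOn.mono Icc_subset_Ici_self)
    rw [inter_comm]
    exact hyz.preimage_isClosed_of_isClosed isClosed_Icc isClosed_diagonal
  exact hclosed.Icc_subset_of_forall_mem_nhdsWithin h₀
    (fun t ht => hv.eventuallyEq_nhdsGT_of_isForwardSolution hy hz ht.2.1 ht.1) ⟨hT, le_rfl⟩

end LocallyLipschitzOn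

section Extent

variable (Γ : F →L[ℝ] E) (R : E → F) (σ : E) {K : Set E}

lemma IsForwardSolution.const_add_map {x : ℝ → F}
    (hx : IsForwardSolution (fun q => R (σ + Γ q)) ((σ + Γ ·) ⁻¹' K) x) :
    IsForwardSolution (fun S => Γ (R S)) K (fun t => σ + Γ (x t)) := fun t ht =>
  ⟨(hx t ht).1, (Γ.hasFDerivAt.comp_hasDerivWithinAt t (hx t ht).2).const_add σ⟩

variable [CompleteSpace F] {R} (hR : ContinuousOn R K) {S : ℝ → E}
  (hS : IsForwardSolution (fun S => Γ (R S)) K S) (x₀ : F)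
include hR hS

lemma hasDerivWithinAt_extent_integral {t : ℝ} (ht : 0 ≤ t) :
    HasDerivWithinAt (fun u => x₀ + ∫ τ in (0 : ℝ)..u, R (S τ)) (R (S t)) (Ici 0) t :=
  ((hR.comp hS.continuousOn fun τ hτ => (hS τ hτ).1).hasDerivWithinAt_integral_Ici ht).const_add
    x₀

lemma species_eq_extent_integral (hS₀ : S 0 = σ + Γ x₀) {t : ℝ} (ht : 0 ≤ t) :
    S t = σ + Γ (x₀ + ∫ τ in (0 : ℝ)..t, R (S τ)) := by
  refine eqOn_Ici_of_hasDerivWithinAt_eq (f' := fun t => Γ (R (S t)))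
    (g := fun t => σ + Γ (x₀ + ∫ τ in (0 : ℝ)..t, R (S τ))) (fun t ht => (hS t ht).2)
    (fun t ht => ?_) ?_ ht
  · exact (Γ.hasFDerivAt.comp_hasDerivWithinAt t
      (hasDerivWithinAt_extent_integral Γ hR hS x₀ ht)).const_add σ
  · simp [hS₀]

lemma isForwardSolution_extent_integral (hS₀ : S 0 = σ + Γ x₀) :
    IsForwardSolution (fun q => R (σ + Γ q)) ((σ + Γ ·) ⁻¹' K)
      (fun u => x₀ + ∫ τ in (0 : ℝ)..u, R (S τ)) := fun t ht => by
  simp only [mem_preimage]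
  rw [← species_eq_extent_integral Γ σ hR hS x₀ hS₀ ht]
  exact ⟨(hS t ht).1, hasDerivWithinAt_extent_integral Γ hR hS x₀ ht⟩

end Extent

theorem stmt15_general {n m : ℕ}
    (Γ : EuclideanSpace ℝ (Fin m) →ₗ[ℝ] EuclideanSpace ℝ (Fin n))
    (R : EuclideanSpace ℝ (Fin n) → EuclideanSpace ℝ (Fin m))
    -- R is locally Lipschitz on the nonnegative orthant
    (hR : ∀ S₀ : EuclideanSpace ℝ (Fin n), (∀ i, 0 ≤ S₀ i) →
      ∃ L : NNReal, ∃ U ∈ nhdsWithin S₀ {S : EuclideanSpace ℝ (Fin n) | ∀ i, 0 ≤ S i},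
        LipschitzOnWith L R U)
    (σ : EuclideanSpace ℝ (Fin n)) :
    -- part (i)
    (∀ x₀ : EuclideanSpace ℝ (Fin m), (∀ i, 0 ≤ (σ + Γ x₀) i) →
      ∀ S : ℝ → EuclideanSpace ℝ (Fin n), S 0 = σ + Γ x₀ →
        (∀ t : ℝ, 0 ≤ t → (∀ i, 0 ≤ S t i) ∧
          HasDerivWithinAt S (Γ (R (S t))) (Set.Ici 0) t) →
        -- x(t) := x₀ + ∫₀ᵗ R(S(τ)) dτ is a solution of the extent system,
        -- with S(t) = σ + Γ x(t) and x(t) ∈ X_σ for all t ≥ 0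
        (∀ t : ℝ, 0 ≤ t →
          (∀ i, 0 ≤ (σ + Γ (x₀ + ∫ τ in (0 : ℝ)..t, R (S τ))) i) ∧
          S t = σ + Γ (x₀ + ∫ τ in (0 : ℝ)..t, R (S τ)) ∧
          HasDerivWithinAt (fun u : ℝ => x₀ + ∫ τ in (0 : ℝ)..u, R (S τ))
            (R (σ + Γ (x₀ + ∫ τ in (0 : ℝ)..t, R (S τ)))) (Set.Ici 0) t) ∧
        -- and it is the unique such solution
        (∀ y : ℝ → EuclideanSpace ℝ (Fin m), y 0 = x₀ →
          (∀ t : ℝ, 0 ≤ t → (∀ i, 0 ≤ (σ + Γ (y t)) i) ∧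
            HasDerivWithinAt y (R (σ + Γ (y t))) (Set.Ici 0) t) →
          ∀ t : ℝ, 0 ≤ t → y t = x₀ + ∫ τ in (0 : ℝ)..t, R (S τ))) ∧
    -- part (ii)
    ((∀ S : ℝ → EuclideanSpace ℝ (Fin n), (∀ i, 0 ≤ S 0 i) →
        (∀ t : ℝ, 0 ≤ t → (∀ i, 0 ≤ S t i) ∧
          HasDerivWithinAt S (Γ (R (S t))) (Set.Ici 0) t) →
        ∃ M : ℝ, ∀ t : ℝ, 0 ≤ t → ‖S t‖ ≤ M) →
      ∀ x : ℝ → EuclideanSpace ℝ (Fin m),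
        (∀ t : ℝ, 0 ≤ t → (∀ i, 0 ≤ (σ + Γ (x t)) i) ∧
          HasDerivWithinAt x (R (σ + Γ (x t))) (Set.Ici 0) t) →
        ∃ M : ℝ, ∀ t : ℝ, 0 ≤ t → ‖Γ (x t)‖ ≤ M) := by
  let Γ' := LinearMap.toContinuousLinearMap Γ
  let K : Set (EuclideanSpace ℝ (Fin n)) := {S | ∀ i, 0 ≤ S i}
  have hRc : ContinuousOn R K := LocallyLipschitzOn.continuousOn hR
  refine ⟨fun x₀ _ S hS₀ hS => ?_, fun hbdd x hx => ?_⟩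
  · have hx := isForwardSolution_extent_integral Γ' σ hRc hS x₀ hS₀
    have hextent : LocallyLipschitzOn ((σ + Γ' ·) ⁻¹' K) (fun q => R (σ + Γ' q)) :=
      LocallyLipschitzOn.comp_lipschitzWith hR ((LipschitzWith.const σ).add Γ'.lipschitz)
    refine ⟨fun t ht => ⟨(hx t ht).1, species_eq_extent_integral Γ' σ hRc hS x₀ hS₀ ht,
      (hx t ht).2⟩, fun y hy₀ hy t ht => ?_⟩
    exact hextent.eqOn_Ici_of_isForwardSolution hy hx (by simp [hy₀]) ht
  · have hx : IsForwardSolution (fun q => R (σ + Γ' q)) ((σ + Γ' ·) ⁻¹' K) x := hx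
    obtain ⟨M, hM⟩ := hbdd (fun t => σ + Γ (x t)) (hx 0 le_rfl).1 (hx.const_add_map Γ' R σ)
    refine ⟨M + ‖σ‖, fun t ht => ?_⟩
    calc ‖Γ (x t)‖ = ‖(σ + Γ (x t)) - σ‖ := by rw [add_sub_cancel_left]
      _ ≤ ‖σ + Γ (x t)‖ + ‖σ‖ := norm_sub_le _ _
      _ ≤ M + ‖σ‖ := by gcongr; exact hM t ht

/-- fix `σ ≥ 0`. (i) For `x₀ ∈ X_σ` and `S` the solution of `Ṡ = Γ R(S)`
with `S(0) = σ + Γ x₀`, the function `x(t) = x₀ + ∫₀ᵗ R(S(τ)) dτ` is the unique solution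
of the extent system `ẋ = R(σ + Γ x)` with `x(0) = x₀`; it satisfies `S(t) = σ + Γ x(t)`
and `x(t) ∈ X_σ` for all `t ≥ 0` (forward completeness of the extent system on `X_σ`).
(ii) If every solution of `Ṡ = Γ R(S)` on the nonnegative orthant is bounded, then for
every solution `x(t)` of the extent system on `X_σ`, `t ↦ Γ x(t)` is bounded on
`[0, ∞)`. -/
theorem stmt15 {n m : ℕ}
    (Γ : EuclideanSpace ℝ (Fin m) →ₗ[ℝ] EuclideanSpace ℝ (Fin n))
    (R : EuclideanSpace ℝ (Fin n) → EuclideanSpace ℝ (Fin m))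
    -- R is locally Lipschitz on the nonnegative orthant
    (hR : ∀ S₀ : EuclideanSpace ℝ (Fin n), (∀ i, 0 ≤ S₀ i) →
      ∃ L : NNReal, ∃ U ∈ nhdsWithin S₀ {S : EuclideanSpace ℝ (Fin n) | ∀ i, 0 ≤ S i},
        LipschitzOnWith L R U)
    (σ : EuclideanSpace ℝ (Fin n)) (hσ : ∀ i, 0 ≤ σ i) :
    -- part (i)
    (∀ x₀ : EuclideanSpace ℝ (Fin m), (∀ i, 0 ≤ (σ + Γ x₀) i) →
      ∀ S : ℝ → EuclideanSpace ℝ (Fin n), S 0 = σ + Γ x₀ →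
        (∀ t : ℝ, 0 ≤ t → (∀ i, 0 ≤ S t i) ∧
          HasDerivWithinAt S (Γ (R (S t))) (Set.Ici 0) t) →
        -- x(t) := x₀ + ∫₀ᵗ R(S(τ)) dτ is a solution of the extent system,
        -- with S(t) = σ + Γ x(t) and x(t) ∈ X_σ for all t ≥ 0
        (∀ t : ℝ, 0 ≤ t →
          (∀ i, 0 ≤ (σ + Γ (x₀ + ∫ τ in (0 : ℝ)..t, R (S τ))) i) ∧
          S t = σ + Γ (x₀ + ∫ τ in (0 : ℝ)..t, R (S τ)) ∧
          HasDerivWithinAt (fun u : ℝ => x₀ + ∫ τ in (0 : ℝ)..u, R (S τ))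
            (R (σ + Γ (x₀ + ∫ τ in (0 : ℝ)..t, R (S τ)))) (Set.Ici 0) t) ∧
        -- and it is the unique such solution
        (∀ y : ℝ → EuclideanSpace ℝ (Fin m), y 0 = x₀ →
          (∀ t : ℝ, 0 ≤ t → (∀ i, 0 ≤ (σ + Γ (y t)) i) ∧
            HasDerivWithinAt y (R (σ + Γ (y t))) (Set.Ici 0) t) →
          ∀ t : ℝ, 0 ≤ t → y t = x₀ + ∫ τ in (0 : ℝ)..t, R (S τ))) ∧
    -- part (ii)
    ((∀ S : ℝ → EuclideanSpace ℝ (Fin n), (∀ i, 0 ≤ S 0 i) →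
        (∀ t : ℝ, 0 ≤ t → (∀ i, 0 ≤ S t i) ∧
          HasDerivWithinAt S (Γ (R (S t))) (Set.Ici 0) t) →
        ∃ M : ℝ, ∀ t : ℝ, 0 ≤ t → ‖S t‖ ≤ M) →
      ∀ x : ℝ → EuclideanSpace ℝ (Fin m),
        (∀ t : ℝ, 0 ≤ t → (∀ i, 0 ≤ (σ + Γ (x t)) i) ∧
          HasDerivWithinAt x (R (σ + Γ (x t))) (Set.Ici 0) t) →
        ∃ M : ℝ, ∀ t : ℝ, 0 ≤ t → ‖Γ (x t)‖ ≤ M) :=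
  stmt15_general Γ R hR σ
end

section
/- Consider the extent system of the futile cycle on X_σ = {x ∈ ℝ⁴ : σ + Γx ≥ 0}: ẋ₁ = k₁(σ₃ + x₂ − x₁)(σ₁ + x₄ − x₁) − k₋₁(σ₅ + x₁ − x₂), ẋ₂ = k₂(σ₅ + x₁ − x₂), ẋ₃ = k₃(σ₄ + x₄ − x₃)(σ₂ + x₂ − x₃) − k₋₃(σ₆ + x₃ − x₄), ẋ₄ = k₄(σ₆ + x₃ − x₄), with positive constants k₁, k₋₁, k₂, k₃, k₋₃, k₄ and σ ∈ ℝ⁶_{≥0}. If σ₃ + σ₅ > 0, then no solution x(t) remaining in X_σ on a nondegenerate time interval satisfies σ₃ + x₂(t) − x₁(t) = 0 identically on that interval; likewise, if σ₄ + σ₆ > 0, no such solution satisfies σ₄ + x₄(t) − x₃(t) = 0 identically. -/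
/-!
If the free enzyme `E = σ_E + v - u` of a Michaelis–Menten step vanished on a whole interval,
then so would its derivative `v' - u' = k_cat C - (k_f E S - k_b C) = (k_cat + k_b) C`, forcing
the complex `C` to vanish as well. This contradicts the conservation law `E + C = σ_E + σ_C > 0`.
Both halves of the futile cycle are such a step.
-/

open Set

theorem HasDerivWithinAt.eq_zero_of_forall_mem_eq {𝕜 F : Type*} [NontriviallyNormedField 𝕜]
    [NormedAddCommGroup F] [NormedSpace 𝕜 F] {f : 𝕜 → F} {f' c : F} {s : Set 𝕜} {x : 𝕜}
    (hs : UniqueDiffWithinAt 𝕜 s x) (hx : x ∈ s) (hf : HasDerivWithinAt f f' s x)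
    (hc : ∀ y ∈ s, f y = c) : f' = 0 :=
  hs.eq_deriv s hf ((hasDerivWithinAt_const x s c).congr_of_mem hc hx)

/-- `u` is the extent of complex formation `E + S ⇌ C` and `v` that of catalysis `C → E + P`;
`S` is the substrate concentration at time `a`. -/
theorem enzyme_not_identically_zero {u v : ℝ → ℝ} {kf kb kcat σE σC S a b : ℝ}
    (hkb : 0 < kb) (hkcat : 0 < kcat) (hab : a < b) (hσ : 0 < σE + σC)
    (hu : HasDerivWithinAt u (kf * (σE + v a - u a) * S - kb * (σC + u a - v a)) (Icc a b) a)
    (hv : HasDerivWithinAt v (kcat * (σC + u a - v a)) (Icc a b) a) :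
    ¬ ∀ t ∈ Icc a b, σE + v t - u t = 0 := by
  intro hE
  have ha : a ∈ Icc a b := left_mem_Icc.mpr hab.le
  have hEa : σE + v a - u a = 0 := hE a ha
  have hderiv : kcat * (σC + u a - v a) - (kf * (σE + v a - u a) * S - kb * (σC + u a - v a))
      = 0 :=
    (hv.sub hu).eq_zero_of_forall_mem_eq (uniqueDiffOn_Icc hab a ha) ha
      (c := -σE) fun t ht => by rw [Pi.sub_apply]; linarith [hE t ht]
  have hC : σC + u a - v a = σE + σC := by linarith
  rw [hEa, hC] at hderiv
  have : 0 < (kcat + kb) * (σE + σC) := by positivity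
  linarith

theorem stmt19_general (k1 km1 k2 k3 km3 k4 : ℝ)
    (hkm1 : 0 < km1) (hk2 : 0 < k2)
    (hkm3 : 0 < km3) (hk4 : 0 < k4)
    (σ₁ σ₂ σ₃ σ₄ σ₅ σ₆ : ℝ)
    -- a nondegenerate time interval [a, b]
    (a b : ℝ) (hab : a < b)
    -- x(t) is a solution of the extent system remaining in X_σ on [a, b]:
    (x₁ x₂ x₃ x₄ : ℝ → ℝ)
    -- the extent differential equations
    (hode : ∀ t ∈ Set.Icc a b,
      HasDerivWithinAt x₁
        (k1 * (σ₃ + x₂ t - x₁ t) * (σ₁ + x₄ t - x₁ t) - km1 * (σ₅ + x₁ t - x₂ t))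
        (Set.Icc a b) t ∧
      HasDerivWithinAt x₂ (k2 * (σ₅ + x₁ t - x₂ t)) (Set.Icc a b) t ∧
      HasDerivWithinAt x₃
        (k3 * (σ₄ + x₄ t - x₃ t) * (σ₂ + x₂ t - x₃ t) - km3 * (σ₆ + x₃ t - x₄ t))
        (Set.Icc a b) t ∧
      HasDerivWithinAt x₄ (k4 * (σ₆ + x₃ t - x₄ t)) (Set.Icc a b) t) :
    (0 < σ₃ + σ₅ → ¬ ∀ t ∈ Set.Icc a b, σ₃ + x₂ t - x₁ t = 0) ∧
    (0 < σ₄ + σ₆ → ¬ ∀ t ∈ Set.Icc a b, σ₄ + x₄ t - x₃ t = 0) := by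
  obtain ⟨hx₁, hx₂, hx₃, hx₄⟩ := hode a (left_mem_Icc.mpr hab.le)
  exact ⟨fun hσ => enzyme_not_identically_zero hkm1 hk2 hab hσ hx₁ hx₂,
    fun hσ => enzyme_not_identically_zero hkm3 hk4 hab hσ hx₃ hx₄⟩

/-- for the extent system of the futile cycle on
`X_σ = {x ∈ ℝ⁴ : σ + Γ x ≥ 0}` with positive rate constants, if `σ₃ + σ₅ > 0` then no
solution remaining in `X_σ` on a nondegenerate time interval `[a, b]` satisfies
`σ₃ + x₂(t) - x₁(t) = 0` identically on `[a, b]`; likewise, if `σ₄ + σ₆ > 0`, no such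
solution satisfies `σ₄ + x₄(t) - x₃(t) = 0` identically. -/
theorem stmt19 (k1 km1 k2 k3 km3 k4 : ℝ)
    (hk1 : 0 < k1) (hkm1 : 0 < km1) (hk2 : 0 < k2)
    (hk3 : 0 < k3) (hkm3 : 0 < km3) (hk4 : 0 < k4)
    (σ₁ σ₂ σ₃ σ₄ σ₅ σ₆ : ℝ)
    (hσ₁ : 0 ≤ σ₁) (hσ₂ : 0 ≤ σ₂) (hσ₃ : 0 ≤ σ₃)
    (hσ₄ : 0 ≤ σ₄) (hσ₅ : 0 ≤ σ₅) (hσ₆ : 0 ≤ σ₆)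
    -- a nondegenerate time interval [a, b]
    (a b : ℝ) (hab : a < b)
    -- x(t) is a solution of the extent system remaining in X_σ on [a, b]:
    (x₁ x₂ x₃ x₄ : ℝ → ℝ)
    -- σ + Γ x(t) ≥ 0, i.e. all species concentrations P, Q, E, F, C, D stay nonnegative
    (hX : ∀ t ∈ Set.Icc a b,
      0 ≤ σ₁ - x₁ t + x₄ t ∧ 0 ≤ σ₂ + x₂ t - x₃ t ∧ 0 ≤ σ₃ - x₁ t + x₂ t ∧
      0 ≤ σ₄ - x₃ t + x₄ t ∧ 0 ≤ σ₅ + x₁ t - x₂ t ∧ 0 ≤ σ₆ + x₃ t - x₄ t)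
    -- the extent differential equations
    (hode : ∀ t ∈ Set.Icc a b,
      HasDerivWithinAt x₁
        (k1 * (σ₃ + x₂ t - x₁ t) * (σ₁ + x₄ t - x₁ t) - km1 * (σ₅ + x₁ t - x₂ t))
        (Set.Icc a b) t ∧
      HasDerivWithinAt x₂ (k2 * (σ₅ + x₁ t - x₂ t)) (Set.Icc a b) t ∧
      HasDerivWithinAt x₃
        (k3 * (σ₄ + x₄ t - x₃ t) * (σ₂ + x₂ t - x₃ t) - km3 * (σ₆ + x₃ t - x₄ t))
        (Set.Icc a b) t ∧
      HasDerivWithinAt x₄ (k4 * (σ₆ + x₃ t - x₄ t)) (Set.Icc a b) t) :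
    (0 < σ₃ + σ₅ → ¬ ∀ t ∈ Set.Icc a b, σ₃ + x₂ t - x₁ t = 0) ∧
    (0 < σ₄ + σ₆ → ¬ ∀ t ∈ Set.Icc a b, σ₄ + x₄ t - x₃ t = 0) :=
  stmt19_general k1 km1 k2 k3 km3 k4 hkm1 hk2 hkm3 hk4 σ₁ σ₂ σ₃ σ₄ σ₅ σ₆ a b hab x₁ x₂ x₃ x₄ hode
end
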